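/- Fix integers r ≥ 1, an unbounded nondecreasing availability function t : ℕ → ℕ, and a constant c ≥ 3. For each n, let p_n = (1/2)·(1 − (c·log₂ n / t(n))^{1/(2r)}) (assume n is large enough that 0 < c·log₂ n / t(n) < 1), and suppose every index i ∈ {1, …, n} has t(n) pairwise disjoint recovery sets of size r in {1, …, n} \ {i}. Call an error vector e ∈ 𝔽₂^n of Hamming weight w_n = p_n·n uncorrectable if there exists an index i for which at least t(n)/2 of its recovery-set parities Σ_{u∈R^{j,i}} e_u equal 1. Then the fraction (number of uncorrectable weight-w_n vectors)/(number of all weight-w_n vectors) tends to 0 as n → ∞. -/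

import Mathlib

open Finset Filter

def hammingWt {n : ℕ} (e : Fin n → ZMod 2) : ℕ :=
  (univ.filter (fun u => e u = 1)).card

/-!
Tilt the uniform distribution on weight-`w` errors to i.i.d. `Bernoulli(θ)` bits with
`θ = w / n`: every weight-`w` vector then has the same probability, and the event "weight
exactly `w`" has probability at least `1 / (n + 1)`, since `w` is the mode of `Binomial(n, θ)`.
Under the product measure the parities of the `t` disjoint recovery sets of a fixed symbol are
independent `Bernoulli(q)` bits with `1 - 2q = (1 - 2θ)^r`, so by a Chernoff bound at least
half of them are odd with probability at most `(1 - (1 - 2θ)^(2r))^(t/2) ≤ exp (-(x t) / 2)`,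
where `x = c log₂ n / t ≤ (1 - 2θ)^(2r)` by the choice of `w`. A union bound over the `n`
symbols bounds the fraction of uncorrectable errors by `(n + 1) n n^(-c / (2 log 2))`, which
tends to `0` because `c ≥ 3 > 4 log 2`.
-/

open Function

theorem ZMod.two_eq_zero_or_eq_one (v : ZMod 2) : v = 0 ∨ v = 1 := by
  decide +revert

theorem sum_zmod_two {M : Type*} [AddCommMonoid M] (f : ZMod 2 → M) :
    ∑ v, f v = f 0 + f 1 := by
  rw [show (univ : Finset (ZMod 2)) = {0, 1} by decide, sum_pair (by decide)]

def paritySign (v : ZMod 2) : ℝ := if v = 1 then -1 else 1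

theorem paritySign_zero : paritySign 0 = 1 := if_neg (by decide)

theorem paritySign_one : paritySign 1 = -1 := if_pos rfl

theorem paritySign_add (x y : ZMod 2) : paritySign (x + y) = paritySign x * paritySign y := by
  rcases x.two_eq_zero_or_eq_one with rfl | rfl <;>
    rcases y.two_eq_zero_or_eq_one with rfl | rfl <;>
    simp [paritySign_zero, paritySign_one, show (1 + 1 : ZMod 2) = 0 by decide]

theorem paritySign_sum {α : Type*} (s : Finset α) (e : α → ZMod 2) :
    paritySign (∑ u ∈ s, e u) = ∏ u ∈ s, paritySign (e u) := by
  classical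
  induction s using Finset.induction with
  | empty => simp [paritySign_zero]
  | insert a s ha ih => rw [sum_insert ha, prod_insert ha, paritySign_add, ih]

section BernoulliWeight

variable {α : Type*} [Fintype α]

def bernoulliWeight (θ : ℝ) (e : α → ZMod 2) : ℝ :=
  ∏ u, if e u = 1 then θ else 1 - θ

theorem bernoulliWeight_nonneg {θ : ℝ} (h0 : 0 ≤ θ) (h1 : θ ≤ 1) (e : α → ZMod 2) :
    0 ≤ bernoulliWeight θ e :=
  prod_nonneg fun u _ => by split_ifs <;> linarith

theorem bernoulliWeight_eq_pow {n : ℕ} (θ : ℝ) (e : Fin n → ZMod 2) :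
    bernoulliWeight θ e = θ ^ hammingWt e * (1 - θ) ^ (n - hammingWt e) := by
  have hcompl := card_filter_add_card_filter_not (s := univ) (fun u => e u = 1)
  rw [card_univ, Fintype.card_fin] at hcompl
  rw [bernoulliWeight, prod_ite, prod_const, prod_const, hammingWt]
  congr 2
  omega

variable [DecidableEq α]

theorem sum_bernoulliWeight_mul_prod_paritySign (θ : ℝ) (U : Finset α) :
    ∑ e : α → ZMod 2, bernoulliWeight θ e * ∏ u ∈ U, paritySign (e u) = (1 - 2 * θ) ^ #U := by
  have hcoord (u : α) :
      ∑ v : ZMod 2, (if v = 1 then θ else 1 - θ) * (if u ∈ U then paritySign v else 1)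
        = if u ∈ U then 1 - 2 * θ else 1 := by
    rw [sum_zmod_two, if_neg (by decide), if_pos rfl]
    split_ifs
    · rw [paritySign_zero, paritySign_one]; ring
    · ring
  simp_rw [bernoulliWeight, ← Fintype.prod_ite_mem U, ← prod_mul_distrib]
  rw [← Fintype.prod_sum fun u v => (if v = 1 then θ else 1 - θ) *
      (if u ∈ U then paritySign v else 1),
    prod_congr rfl fun u _ => hcoord u, Fintype.prod_ite_mem, prod_const]

variable {ι : Type*}

theorem sum_bernoulliWeight_mul_prod_paritySign_sum (θ : ℝ) {r : ℕ} (B : ι → Finset α)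
    (hB : Pairwise (Disjoint on B)) (hcard : ∀ j, #(B j) = r) (s : Finset ι) :
    ∑ e : α → ZMod 2, bernoulliWeight θ e * ∏ j ∈ s, paritySign (∑ u ∈ B j, e u)
      = ((1 - 2 * θ) ^ r) ^ #s := by
  simp_rw [paritySign_sum, ← prod_biUnion (hB.set_pairwise s)]
  rw [sum_bernoulliWeight_mul_prod_paritySign, card_biUnion (hB.set_pairwise s),
    sum_const_nat fun j _ => hcard j, pow_mul']

/-- Expanding the product over the subsets `s` of blocks reduces it to
`sum_bernoulliWeight_mul_prod_paritySign_sum`: the parities of disjoint blocks are independent. -/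
theorem sum_bernoulliWeight_mul_prod_add_mul_paritySign [Fintype ι] (θ : ℝ) {r : ℕ}
    (B : ι → Finset α) (hB : Pairwise (Disjoint on B)) (hcard : ∀ j, #(B j) = r) (a b : ℝ) :
    ∑ e : α → ZMod 2, bernoulliWeight θ e * ∏ j, (a + b * paritySign (∑ u ∈ B j, e u))
      = (a + b * (1 - 2 * θ) ^ r) ^ Fintype.card ι := by
  classical
  calc ∑ e : α → ZMod 2, bernoulliWeight θ e * ∏ j, (a + b * paritySign (∑ u ∈ B j, e u))
      = ∑ s : Finset ι, a ^ #s * b ^ #sᶜ *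
          ∑ e : α → ZMod 2, bernoulliWeight θ e * ∏ j ∈ sᶜ, paritySign (∑ u ∈ B j, e u) := by
        simp_rw [Fintype.prod_add, mul_sum, prod_mul_distrib, prod_const]
        rw [sum_comm]
        exact sum_congr rfl fun s _ => sum_congr rfl fun e _ => by ring
    _ = ∑ s : Finset ι, (∏ _j ∈ s, a) * ∏ _j ∈ sᶜ, b * (1 - 2 * θ) ^ r := by
        simp_rw [sum_bernoulliWeight_mul_prod_paritySign_sum θ B hB hcard, prod_const, mul_pow,
          mul_assoc]
    _ = (a + b * (1 - 2 * θ) ^ r) ^ Fintype.card ι := by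
        rw [← Fintype.prod_add, prod_const, card_univ]

variable [Fintype ι]

def oddParityCount (B : ι → Finset α) (e : α → ZMod 2) : ℕ :=
  (univ.filter fun j => ∑ u ∈ B j, e u = 1).card

theorem sum_bernoulliWeight_mul_pow_oddParityCount (θ μ : ℝ) {r : ℕ} (B : ι → Finset α)
    (hB : Pairwise (Disjoint on B)) (hcard : ∀ j, #(B j) = r) :
    ∑ e : α → ZMod 2, bernoulliWeight θ e * μ ^ oddParityCount B e
      = ((1 + μ) / 2 + (1 - μ) / 2 * (1 - 2 * θ) ^ r) ^ Fintype.card ι := by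
  rw [← sum_bernoulliWeight_mul_prod_add_mul_paritySign θ B hB hcard]
  refine sum_congr rfl fun e _ => ?_
  have hpow : μ ^ oddParityCount B e = ∏ j, if ∑ u ∈ B j, e u = 1 then μ else 1 := by
    rw [prod_ite, prod_const, prod_const, one_pow, mul_one, oddParityCount]
  rw [hpow]
  congr 1
  refine prod_congr rfl fun j _ => ?_
  simp only [paritySign]
  split_ifs <;> ring

theorem sum_bernoulliWeight_oddParityCount_tail_le {θ : ℝ} (hθ0 : 0 < θ) (hθ : θ ≤ 1 / 2)
    {r : ℕ} (hr : r ≠ 0) (B : ι → Finset α) (hB : Pairwise (Disjoint on B))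
    (hcard : ∀ j, #(B j) = r) :
    ∑ e with Fintype.card ι ≤ 2 * oddParityCount B e, bernoulliWeight θ e
      ≤ √(1 - (1 - 2 * θ) ^ (2 * r)) ^ Fintype.card ι := by
  set T := Fintype.card ι
  set A := (1 - 2 * θ) ^ r
  have hA0 : 0 ≤ A := pow_nonneg (by linarith) r
  have hA1 : A < 1 := pow_lt_one₀ (by linarith) (by linarith) hr
  have hA1' : 1 - A ≠ 0 := (sub_pos.2 hA1).ne'
  have hW (e : α → ZMod 2) : 0 ≤ bernoulliWeight θ e :=
    bernoulliWeight_nonneg hθ0.le (by linarith) e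
  -- `μ` minimises `((1 + μ²) + (1 - μ²) A) / (2μ)`, the Chernoff bound for `μ ^ (2 K) ≥ μ ^ T`.
  set μ := √((1 + A) / (1 - A))
  have hμ1 : 1 ≤ μ := Real.one_le_sqrt.mpr ((one_le_div (by linarith)).mpr (by linarith))
  have hμsq : μ ^ 2 = (1 + A) / (1 - A) := Real.sq_sqrt (div_nonneg (by linarith) (by linarith))
  have hmgf : (1 + μ ^ 2) / 2 + (1 - μ ^ 2) / 2 * A = 1 + A := by
    rw [hμsq]; field_simp; ring
  have hbase : √(1 - (1 - 2 * θ) ^ (2 * r)) * μ = 1 + A := by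
    rw [pow_mul', ← Real.sqrt_mul (by nlinarith),
      show (1 - A ^ 2) * ((1 + A) / (1 - A)) = (1 + A) ^ 2 by field_simp; ring,
      Real.sqrt_sq (by linarith)]
  have hmarkov :
      (∑ e with T ≤ 2 * oddParityCount B e, bernoulliWeight θ e) * μ ^ T ≤ (1 + A) ^ T :=
    calc (∑ e with T ≤ 2 * oddParityCount B e, bernoulliWeight θ e) * μ ^ T
        ≤ ∑ e with T ≤ 2 * oddParityCount B e,
            bernoulliWeight θ e * (μ ^ 2) ^ oddParityCount B e := by
          rw [sum_mul]
          refine sum_le_sum fun e he => mul_le_mul_of_nonneg_left ?_ (hW e)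
          rw [← pow_mul]
          exact pow_le_pow_right₀ hμ1 (mem_filter.1 he).2
      _ ≤ ∑ e, bernoulliWeight θ e * (μ ^ 2) ^ oddParityCount B e :=
          sum_le_sum_of_subset_of_nonneg (filter_subset _ _) fun e _ _ =>
            mul_nonneg (hW e) (by positivity)
      _ = (1 + A) ^ T := by rw [sum_bernoulliWeight_mul_pow_oddParityCount θ _ B hB hcard, hmgf]
  rw [← hbase, mul_pow] at hmarkov
  exact le_of_mul_le_mul_right hmarkov (by positivity)

end BernoulliWeight

theorem card_filter_hammingWt_eq (n w : ℕ) :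
    #{e : Fin n → ZMod 2 | hammingWt e = w} = n.choose w := by
  rw [← card_fin n, ← card_powersetCard, card_fin]
  refine card_nbij' (fun e => ({u | e u = 1} : Finset (Fin n)))
    (fun S u => if u ∈ S then 1 else 0) ?_ ?_ ?_ ?_
  · intro e he
    simp only [mem_coe, mem_filter, mem_univ, true_and] at he
    simpa [hammingWt] using he
  · intro S hS
    simp only [mem_coe, mem_powersetCard, subset_univ, true_and] at hS
    rw [mem_coe, mem_filter, ← hS]
    simp [hammingWt]
  · intro e _
    funext u
    rcases (e u).two_eq_zero_or_eq_one with h | h <;> simp [h]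
  · intro S _
    ext u
    by_cases h : u ∈ S <;> simp [h]

theorem oddParityCount_eq_zero_of_hammingWt_eq_zero {n : ℕ} {ι : Type*} [Fintype ι]
    (B : ι → Finset (Fin n)) {e : Fin n → ZMod 2} (he : hammingWt e = 0) :
    oddParityCount B e = 0 := by
  have he0 : e = 0 := by
    funext u
    refine (e u).two_eq_zero_or_eq_one.resolve_right fun h => ?_
    rw [hammingWt, card_eq_zero, filter_eq_empty_iff] at he
    exact he (mem_univ u) h
  simp [oddParityCount, he0]

theorem card_filter_hammingWt_mul_le {n w : ℕ} {θ : ℝ} (h0 : 0 ≤ θ) (h1 : θ ≤ 1)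
    (p : (Fin n → ZMod 2) → Prop) [DecidablePred p] :
    #{e | hammingWt e = w ∧ p e} * (θ ^ w * (1 - θ) ^ (n - w))
      ≤ ∑ e with p e, bernoulliWeight θ e := by
  calc #{e | hammingWt e = w ∧ p e} * (θ ^ w * (1 - θ) ^ (n - w))
      = ∑ e with hammingWt e = w ∧ p e, bernoulliWeight θ e := by
        rw [← nsmul_eq_mul, ← sum_const]
        exact sum_congr rfl fun e he => by rw [bernoulliWeight_eq_pow, (mem_filter.1 he).2.1]
    _ ≤ ∑ e with p e, bernoulliWeight θ e :=
        sum_le_sum_of_subset_of_nonneg (fun e he => by simp_all)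
          fun e _ _ => bernoulliWeight_nonneg h0 h1 e

theorem choose_succ_mul_pow_mul_pow {n k : ℕ} (w : ℕ) (hk : k < n) :
    n.choose (k + 1) * w ^ (k + 1) * (n - w) ^ (n - (k + 1)) * ((k + 1) * (n - w))
      = n.choose k * w ^ k * (n - w) ^ (n - k) * ((n - k) * w) := by
  have hd : n - k = n - (k + 1) + 1 := by omega
  have hc := Nat.choose_succ_right_eq n k
  rw [hd] at hc ⊢
  calc _ = n.choose (k + 1) * (k + 1) * (w ^ (k + 1) * (n - w) ^ (n - (k + 1)) * (n - w)) := by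
        ring
    _ = _ := by rw [hc]; ring

/-- `n ^ n` times the `Binomial(n, w / n)` distribution has its mode at `w`. -/
theorem choose_mul_pow_mul_pow_le {n w k : ℕ} (hw : w ≤ n) (hk : k ≤ n) :
    n.choose k * w ^ k * (n - w) ^ (n - k) ≤ n.choose w * w ^ w * (n - w) ^ (n - w) := by
  set f : ℕ → ℕ := fun k => n.choose k * w ^ k * (n - w) ^ (n - k)
  have hup (k : ℕ) (hkw : k < w) : f k ≤ f (k + 1) := by
    refine Nat.le_of_mul_le_mul_right ?_ (Nat.mul_pos (by omega) (by omega) : 0 < (n - k) * w)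
    calc f k * ((n - k) * w) = f (k + 1) * ((k + 1) * (n - w)) :=
          (choose_succ_mul_pow_mul_pow w (by omega)).symm
      _ ≤ f (k + 1) * ((n - k) * w) := by
          rw [mul_comm (n - k)]
          exact Nat.mul_le_mul_left _ (Nat.mul_le_mul (by omega) (by omega))
  have hdown (k : ℕ) (hwk : w ≤ k) (hkn : k < n) : f (k + 1) ≤ f k := by
    refine Nat.le_of_mul_le_mul_right ?_
      (Nat.mul_pos (by omega) (by omega) : 0 < (k + 1) * (n - w))
    calc f (k + 1) * ((k + 1) * (n - w)) = f k * ((n - k) * w) :=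
          choose_succ_mul_pow_mul_pow w hkn
      _ ≤ f k * ((k + 1) * (n - w)) := by
          rw [mul_comm (k + 1)]
          exact Nat.mul_le_mul_left _ (Nat.mul_le_mul (by omega) (by omega))
  rcases le_total k w with hkw | hwk
  · induction hkw using Nat.decreasingInduction with
    | self => exact le_rfl
    | of_succ k hkw ih => exact (hup k hkw).trans (ih (by omega))
  · induction k, hwk using Nat.le_induction with
    | base => exact le_rfl
    | succ k hwk ih => exact (hdown k hwk (by omega)).trans (ih (by omega))

theorem pow_self_le_succ_mul_choose_mul_pow_mul_pow {n w : ℕ} (hw : w ≤ n) :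
    n ^ n ≤ (n + 1) * (n.choose w * w ^ w * (n - w) ^ (n - w)) := by
  calc n ^ n = (w + (n - w)) ^ n := by rw [Nat.add_sub_cancel' hw]
    _ = ∑ k ∈ range (n + 1), n.choose k * w ^ k * (n - w) ^ (n - k) := by
        rw [add_pow]; exact sum_congr rfl fun k _ => by rw [Nat.cast_id]; ring
    _ ≤ ∑ _k ∈ range (n + 1), n.choose w * w ^ w * (n - w) ^ (n - w) :=
        sum_le_sum fun k hk => choose_mul_pow_mul_pow_le hw (by simpa [Nat.lt_succ_iff] using hk)
    _ = _ := by rw [sum_const, card_range, smul_eq_mul]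

theorem one_le_succ_mul_choose_mul_pow_mul_pow {n w : ℕ} (hw : w ≤ n) (hn : 0 < n) :
    1 ≤ (n + 1) * (n.choose w * ((w / n : ℝ) ^ w * (1 - w / n) ^ (n - w))) := by
  have hn' : (0 : ℝ) < n := by exact_mod_cast hn
  have hnat : (n : ℝ) ^ n ≤ (n + 1) * (n.choose w * w ^ w * ((n : ℝ) - w) ^ (n - w)) := by
    have := pow_self_le_succ_mul_choose_mul_pow_mul_pow hw
    rw [← Nat.cast_le (α := ℝ)] at this
    push_cast [Nat.cast_sub hw] at this
    exact this
  have hD : (w / n : ℝ) ^ w * (1 - w / n) ^ (n - w) = w ^ w * ((n : ℝ) - w) ^ (n - w) / n ^ n := by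
    rw [one_sub_div hn'.ne', div_pow, div_pow, div_mul_div_comm, ← pow_add,
      Nat.add_sub_cancel' hw]
  rw [hD, ← mul_div_assoc, ← mul_div_assoc, one_le_div (by positivity)]
  linarith

theorem card_uncorrectable_mul_le {n t r w : ℕ} {θ : ℝ} (hθ0 : 0 < θ) (hθ : θ ≤ 1 / 2)
    (hr : r ≠ 0) (B : Fin n → Fin t → Finset (Fin n)) (hB : ∀ i, Pairwise (Disjoint on B i))
    (hcard : ∀ i j, #(B i j) = r) :
    #{e : Fin n → ZMod 2 | hammingWt e = w ∧ ∃ i, t ≤ 2 * oddParityCount (B i) e}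
        * (θ ^ w * (1 - θ) ^ (n - w))
      ≤ n * √(1 - (1 - 2 * θ) ^ (2 * r)) ^ t := by
  have hD : 0 ≤ θ ^ w * (1 - θ) ^ (n - w) :=
    mul_nonneg (pow_nonneg hθ0.le _) (pow_nonneg (by linarith) _)
  have hsub : #{e : Fin n → ZMod 2 | hammingWt e = w ∧ ∃ i, t ≤ 2 * oddParityCount (B i) e}
      ≤ ∑ i, #{e | hammingWt e = w ∧ t ≤ 2 * oddParityCount (B i) e} := by
    refine (card_le_card fun e he => ?_).trans card_biUnion_le
    simp only [mem_filter, mem_biUnion, mem_univ, true_and] at he ⊢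
    obtain ⟨hwt, i, hi⟩ := he
    exact ⟨i, hwt, hi⟩
  calc _ ≤ (∑ i, (#{e | hammingWt e = w ∧ t ≤ 2 * oddParityCount (B i) e} : ℝ))
        * (θ ^ w * (1 - θ) ^ (n - w)) := by
        gcongr
        exact_mod_cast hsub
    _ ≤ ∑ _i : Fin n, √(1 - (1 - 2 * θ) ^ (2 * r)) ^ t := by
        rw [sum_mul]
        refine sum_le_sum fun i _ => ?_
        have htail := sum_bernoulliWeight_oddParityCount_tail_le hθ0 hθ hr (B i) (hB i) (hcard i)
        rw [Fintype.card_fin] at htail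
        exact (card_filter_hammingWt_mul_le hθ0.le (by linarith) _).trans htail
    _ = n * √(1 - (1 - 2 * θ) ^ (2 * r)) ^ t := by
        rw [sum_const, card_univ, Fintype.card_fin, nsmul_eq_mul]

theorem card_uncorrectable_le {n t r w : ℕ} (hr : r ≠ 0) (hw : w ≠ 0) (hwn : 2 * w ≤ n)
    (B : Fin n → Fin t → Finset (Fin n)) (hB : ∀ i, Pairwise (Disjoint on B i))
    (hcard : ∀ i j, #(B i j) = r) :
    (#{e : Fin n → ZMod 2 | hammingWt e = w ∧ ∃ i, t ≤ 2 * oddParityCount (B i) e} : ℝ)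
      ≤ (n + 1) * n * √(1 - (1 - 2 * (w / n : ℝ)) ^ (2 * r)) ^ t * n.choose w := by
  have hn : 0 < n := by omega
  have hn' : (0 : ℝ) < n := by exact_mod_cast hn
  have hθ0 : 0 < (w / n : ℝ) := div_pos (by exact_mod_cast Nat.pos_of_ne_zero hw) hn'
  have hθ : (w / n : ℝ) ≤ 1 / 2 := by
    rw [div_le_iff₀ hn']
    have : (2 * w : ℝ) ≤ n := by exact_mod_cast hwn
    linarith
  set N := #{e : Fin n → ZMod 2 | hammingWt e = w ∧ ∃ i, t ≤ 2 * oddParityCount (B i) e}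
  calc (N : ℝ)
      ≤ N * ((n + 1) * (n.choose w * ((w / n : ℝ) ^ w * (1 - w / n) ^ (n - w)))) :=
        le_mul_of_one_le_right (by positivity)
          (one_le_succ_mul_choose_mul_pow_mul_pow (by omega) hn)
    _ = (n + 1) * n.choose w * (N * ((w / n : ℝ) ^ w * (1 - w / n) ^ (n - w))) := by ring
    _ ≤ (n + 1) * n.choose w * (n * √(1 - (1 - 2 * (w / n : ℝ)) ^ (2 * r)) ^ t) :=
        mul_le_mul_of_nonneg_left (card_uncorrectable_mul_le hθ0 hθ hr B hB hcard) (by positivity)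
    _ = _ := by ring

theorem pow_le_one_sub_two_mul_div_pow {x : ℝ} (hx0 : 0 ≤ x) (hx1 : x ≤ 1) {r n w : ℕ}
    (hr : r ≠ 0) (hw : (w : ℝ) ≤ 1 / 2 * (1 - x ^ (1 / (2 * (r : ℝ)))) * n) :
    x ≤ (1 - 2 * (w / n : ℝ)) ^ (2 * r) := by
  have hyx : (x ^ (1 / (2 * (r : ℝ)))) ^ (2 * r) = x := by
    rw [show (1 / (2 * (r : ℝ))) = ((2 * r : ℕ) : ℝ)⁻¹ by push_cast; ring]
    exact Real.rpow_inv_natCast_pow hx0 (by positivity)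
  set y := x ^ (1 / (2 * (r : ℝ)))
  have hy : y ≤ 1 - 2 * (w / n : ℝ) := by
    rcases (Nat.cast_nonneg n : (0 : ℝ) ≤ n).eq_or_lt with hn | hn
    · rw [← hn, div_zero]
      exact Real.rpow_le_one hx0 hx1 (by positivity) |>.trans (by norm_num)
    · have : (w / n : ℝ) ≤ 1 / 2 * (1 - y) := by rw [div_le_iff₀ hn]; linarith
      linarith
  calc x = y ^ (2 * r) := hyx.symm
    _ ≤ _ := pow_le_pow_left₀ (Real.rpow_nonneg hx0 _) hy _

theorem sqrt_one_sub_pow_le_exp (x : ℝ) (t : ℕ) :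
    √(1 - x) ^ t ≤ Real.exp (-(x * t) / 2) := by
  calc √(1 - x) ^ t ≤ Real.exp (-x / 2) ^ t := by
        gcongr
        rw [Real.exp_half]
        exact Real.sqrt_le_sqrt (by linarith [Real.add_one_le_exp (-x)])
    _ = Real.exp (-(x * t) / 2) := by rw [← Real.exp_nat_mul]; ring_nf

theorem card_uncorrectable_div_card_le {n t r w : ℕ} (ht : t ≠ 0) (hr : r ≠ 0) {x : ℝ}
    (hx0 : 0 ≤ x) (hx1 : x ≤ 1)
    (B : Fin n → Fin t → Finset (Fin n)) (hB : ∀ i, Pairwise (Disjoint on B i))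
    (hcard : ∀ i j, #(B i j) = r)
    (hw : w = ⌊(1 / 2 : ℝ) * (1 - x ^ (1 / (2 * (r : ℝ)))) * n⌋₊) :
    (#{e : Fin n → ZMod 2 | hammingWt e = w ∧ ∃ i, t ≤ 2 * oddParityCount (B i) e} : ℝ)
        / #{e : Fin n → ZMod 2 | hammingWt e = w}
      ≤ (n + 1) * n * Real.exp (-(x * t) / 2) := by
  rcases eq_or_ne w 0 with rfl | hw0
  · rw [filter_eq_empty_iff.mpr, card_empty, Nat.cast_zero, zero_div]
    · positivity
    · rintro e - ⟨he, i, hi⟩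
      rw [oddParityCount_eq_zero_of_hammingWt_eq_zero _ he] at hi
      omega
  have hy0 : 0 ≤ x ^ (1 / (2 * (r : ℝ))) := Real.rpow_nonneg hx0 _
  have hy1 : x ^ (1 / (2 * (r : ℝ))) ≤ 1 := Real.rpow_le_one hx0 hx1 (by positivity)
  have hwle : (w : ℝ) ≤ 1 / 2 * (1 - x ^ (1 / (2 * (r : ℝ)))) * n :=
    hw ▸ Nat.floor_le (mul_nonneg (mul_nonneg (by norm_num) (sub_nonneg.2 hy1)) n.cast_nonneg)
  have hwn : 2 * w ≤ n := by
    have : (2 * w : ℝ) ≤ n := by nlinarith [n.cast_nonneg (α := ℝ)]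
    exact_mod_cast this
  have hchoose : (0 : ℝ) < n.choose w := by exact_mod_cast Nat.choose_pos (by omega)
  rw [card_filter_hammingWt_eq, div_le_iff₀ hchoose]
  refine (card_uncorrectable_le hr hw0 hwn B hB hcard).trans ?_
  gcongr
  calc √(1 - (1 - 2 * (w / n : ℝ)) ^ (2 * r)) ^ t ≤ √(1 - x) ^ t := by
        gcongr
        exact pow_le_one_sub_two_mul_div_pow hx0 hx1 hr hwle
    _ ≤ Real.exp (-(x * t) / 2) := sqrt_one_sub_pow_le_exp x t

theorem exp_mul_logb {b x : ℝ} (c : ℝ) (hx : 0 < x) :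
    Real.exp (c * Real.logb b x) = x ^ (c / Real.log b) := by
  rw [Real.rpow_def_of_pos hx, Real.logb]
  ring_nf

theorem tendsto_succ_mul_mul_rpow_neg {s : ℝ} (hs : 2 < s) :
    Tendsto (fun n : ℕ => ((n : ℝ) + 1) * n * (n : ℝ) ^ (-s)) atTop (nhds 0) := by
  have h1 : Tendsto (fun n : ℕ => 1 + 1 / (n : ℝ)) atTop (nhds 1) := by
    simpa using (tendsto_const_div_atTop_nhds_zero_nat (1 : ℝ)).const_add 1
  have h2 : Tendsto (fun n : ℕ => (n : ℝ) ^ (2 - s)) atTop (nhds 0) := by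
    have := (tendsto_rpow_neg_atTop (by linarith : 0 < s - 2)).comp tendsto_natCast_atTop_atTop
    simpa [Function.comp_def, neg_sub] using this
  refine Tendsto.congr' ?_ (by simpa using h1.mul h2)
  filter_upwards [eventually_gt_atTop 0] with n hn
  have hn' : (0 : ℝ) < n := by exact_mod_cast hn
  rw [sub_eq_add_neg, Real.rpow_add hn', Real.rpow_two]
  field_simp

theorem mld_corrects_virtually_all_errors_bsc_general
    (r : ℕ) (hr : 1 ≤ r) (t : ℕ → ℕ)
    (c : ℝ) (hc : 3 ≤ c)
    (hlarge : ∀ᶠ n : ℕ in atTop,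
      0 < c * Real.logb 2 n / t n ∧ c * Real.logb 2 n / t n < 1)
    (R : (n : ℕ) → Fin n → Fin (t n) → Finset (Fin n))
    (hdisj : ∀ n (i : Fin n) (j j' : Fin (t n)), j ≠ j' → Disjoint (R n i j) (R n i j'))
    (hcard : ∀ n (i : Fin n) (j : Fin (t n)), (R n i j).card = r)
    (w : ℕ → ℕ)
    (hw : ∀ n : ℕ, w n
      = ⌊(1 / 2 : ℝ) * (1 - (c * Real.logb 2 n / t n) ^ (1 / (2 * (r : ℝ)))) * n⌋₊) :
    Tendsto
      (fun n : ℕ =>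
        ((univ.filter (fun e : Fin n → ZMod 2 => hammingWt e = w n ∧
            ∃ i : Fin n, t n ≤ 2 * (univ.filter
              (fun j : Fin (t n) => ∑ u ∈ R n i j, e u = 1)).card)).card : ℝ)
        / ((univ.filter (fun e : Fin n → ZMod 2 => hammingWt e = w n)).card : ℝ))
      atTop (nhds 0) := by
  have hs : 2 < c / 2 / Real.log 2 := by
    rw [lt_div_iff₀ (Real.log_pos one_lt_two)]
    linarith [Real.log_two_lt_d9]
  refine squeeze_zero' (.of_forall fun n => by positivity) ?_ (tendsto_succ_mul_mul_rpow_neg hs)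
  filter_upwards [hlarge, eventually_gt_atTop 0] with n ⟨hx0, hx1⟩ hn
  have ht : t n ≠ 0 := by
    rintro h
    simp [h] at hx0
  calc _ ≤ (n + 1) * n * Real.exp (-(c * Real.logb 2 n / t n * t n) / 2) :=
        card_uncorrectable_div_card_le ht (by omega) hx0.le hx1.le (R n)
          (fun i j j' h => hdisj n i j j' h) (hcard n) (hw n)
    _ = (n + 1) * n * (n : ℝ) ^ (-(c / 2 / Real.log 2)) := by
        rw [div_mul_cancel₀ _ (by exact_mod_cast ht),
          show -(c * Real.logb 2 n) / 2 = -(c / 2) * Real.logb 2 n by ring,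
          exp_mul_logb _ (by exact_mod_cast hn), neg_div]

/-- **Virtually all error patterns of weight `(n/2)(1 − (c log₂ n / t(n))^{1/(2r)})`
are corrected by majority-logic decoding (Theorem 3 of the paper).**
Fix `r ≥ 1`, an unbounded nondecreasing availability `t : ℕ → ℕ`, and `c ≥ 3`.
For each `n` let `p_n = (1/2)(1 − (c log₂ n / t n)^{1/(2r)})` (for `n` large enough
that `0 < c log₂ n / t n < 1`) and `w_n = ⌊p_n n⌋`, and suppose every index
`i ∈ {1,…,n}` has `t n` pairwise disjoint recovery sets of size `r` avoiding `i`.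
An error vector `e ∈ 𝔽₂^n` of weight `w_n` is uncorrectable if some index `i` has
at least `t n / 2` recovery sets of odd error parity.  Then the fraction of
uncorrectable weight-`w_n` vectors among all weight-`w_n` vectors tends to `0`. -/
theorem mld_corrects_virtually_all_errors_bsc
    (r : ℕ) (hr : 1 ≤ r) (t : ℕ → ℕ) (hmono : Monotone t)
    (hunbounded : Tendsto t atTop atTop)
    (c : ℝ) (hc : 3 ≤ c)
    (hlarge : ∀ᶠ n : ℕ in atTop,
      0 < c * Real.logb 2 n / t n ∧ c * Real.logb 2 n / t n < 1)
    (R : (n : ℕ) → Fin n → Fin (t n) → Finset (Fin n))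
    (hdisj : ∀ n (i : Fin n) (j j' : Fin (t n)), j ≠ j' → Disjoint (R n i j) (R n i j'))
    (hnoti : ∀ n (i : Fin n) (j : Fin (t n)), i ∉ R n i j)
    (hcard : ∀ n (i : Fin n) (j : Fin (t n)), (R n i j).card = r)
    (w : ℕ → ℕ)
    (hw : ∀ n : ℕ, w n
      = ⌊(1 / 2 : ℝ) * (1 - (c * Real.logb 2 n / t n) ^ (1 / (2 * (r : ℝ)))) * n⌋₊) :
    Tendsto
      (fun n : ℕ =>
        ((univ.filter (fun e : Fin n → ZMod 2 => hammingWt e = w n ∧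
            ∃ i : Fin n, t n ≤ 2 * (univ.filter
              (fun j : Fin (t n) => ∑ u ∈ R n i j, e u = 1)).card)).card : ℝ)
        / ((univ.filter (fun e : Fin n → ZMod 2 => hammingWt e = w n)).card : ℝ))
      atTop (nhds 0) :=
  mld_corrects_virtually_all_errors_bsc_general r hr t c hc hlarge R hdisj hcard w hw
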